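/- arXiv:math/0401074 — 5 statements merged into one kernel-verified Lean document; each statement's English description precedes it below -/
import Mathlib

section
/- Let Φ : ℝⁿ → ℝᴺ be a linear map and consider the action of ℝⁿ on the torus 𝕋ᴺ = ℝᴺ/ℤᴺ given by x · φ = φ + Φ(x) mod ℤᴺ. An orbit of this action is dense in 𝕋ᴺ if and only if there is no nonzero integral vector k ∈ ℤᴺ orthogonal to the subspace Φ(ℝⁿ) ⊆ ℝᴺ. -/
/-!
The orbit is dense iff the subgroup `Φ(ℝⁿ) + ℤᴺ` of `ℝᴺ` is dense, and a subgroup of a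
finite-dimensional real vector space is dense iff no nonzero linear functional is integer-valued
on it. For the nontrivial half, a proper closed subgroup `H` is the sum of the largest subspace
`U` it contains and its trace on a complement `W` of `U`; that trace contains no line, so a
compactness argument on the unit sphere makes it discrete. A discrete subgroup either spans a
proper subspace or is a lattice, and either way some nonzero functional is integral on it.
Finally, the functionals integral on `ℤᴺ` and vanishing on `Φ(ℝⁿ)` are exactly `y ↦ ∑ kᵢ yᵢ`
with `k ∈ ℤᴺ` orthogonal to `Φ(ℝⁿ)`.
-/

open Filter Topology Set

theorem eq_zero_of_forall_mul_eq_intCast {c : ℝ} (h : ∀ t : ℝ, ∃ m : ℤ, t * c = m) : c = 0 := by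
  by_contra hc
  obtain ⟨m, hm⟩ := h (c⁻¹ / 2)
  rw [div_mul_eq_mul_div, inv_mul_cancel₀ hc] at hm
  have : 2 * m = 1 := by exact_mod_cast (show ((2 * m : ℤ) : ℝ) = 1 by push_cast; linarith)
  omega

theorem tendsto_intFloor_div_mul {α : Type*} {l : Filter α} {r : α → ℝ} (hr : ∀ a, 0 < r a)
    (h : Tendsto r l (𝓝 0)) (t : ℝ) : Tendsto (fun a => (⌊t / r a⌋ : ℝ) * r a) l (𝓝 t) := by
  have heq : ∀ a, (⌊t / r a⌋ : ℝ) * r a = t - Int.fract (t / r a) * r a := fun a => by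
    rw [Int.fract]; field_simp [(hr a).ne']; ring
  have hfract : Tendsto (fun a => Int.fract (t / r a) * r a) l (𝓝 0) :=
    squeeze_zero (fun a => mul_nonneg (Int.fract_nonneg _) (hr a).le)
      (fun a => mul_le_of_le_one_left (hr a).le (Int.fract_lt_one _).le) h
  simpa [heq] using tendsto_const_nhds.sub hfract

namespace AddSubgroup

section Lineal

variable {F : Type*} [AddCommGroup F] [Module ℝ F]

def linealSpace (H : AddSubgroup F) : Submodule ℝ F where
  carrier := {v | ∀ t : ℝ, t • v ∈ H}
  add_mem' ha hb t := by simpa [smul_add] using H.add_mem (ha t) (hb t)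
  zero_mem' t := by simp
  smul_mem' c v hv t := by simpa [smul_smul] using hv (t * c)

theorem mem_of_mem_linealSpace {H : AddSubgroup F} {v : F} (hv : v ∈ H.linealSpace) : v ∈ H := by
  simpa using hv 1

end Lineal

variable {F : Type*} [NormedAddCommGroup F] [NormedSpace ℝ F]

theorem mem_linealSpace_of_tendsto_normalize {Γ : AddSubgroup F} (hΓ : IsClosed (Γ : Set F))
    {α : Type*} {l : Filter α} [l.NeBot] {γ : α → F} {v : F} (hmem : ∀ a, γ a ∈ Γ)
    (hne : ∀ a, γ a ≠ 0) (hγ : Tendsto (fun a => ‖γ a‖) l (𝓝 0))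
    (hv : Tendsto (fun a => ‖γ a‖⁻¹ • γ a) l (𝓝 v)) : v ∈ Γ.linealSpace := by
  intro t
  have hpos : ∀ a, 0 < ‖γ a‖ := fun a => norm_pos_iff.mpr (hne a)
  refine hΓ.mem_of_tendsto ((tendsto_intFloor_div_mul hpos hγ t).smul hv)
    (Eventually.of_forall fun a => ?_)
  rw [smul_smul, mul_assoc, mul_inv_cancel₀ (hpos a).ne', mul_one, Int.cast_smul_eq_zsmul]
  exact Γ.zsmul_mem (hmem a) _

theorem discreteTopology_of_isClosed_of_linealSpace_eq_bot [FiniteDimensional ℝ F]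
    {Γ : AddSubgroup F} (hΓ : IsClosed (Γ : Set F)) (hlineal : Γ.linealSpace = ⊥) :
    DiscreteTopology Γ := by
  rw [discreteTopology_iff_isOpen_singleton_zero, Metric.isOpen_singleton_iff]
  by_contra! h
  choose γ hγε hγ0 using fun m : ℕ => h (1 / (m + 1)) Nat.one_div_pos_of_nat
  have hne : ∀ m, (γ m : F) ≠ 0 := fun m => by simpa using hγ0 m
  have hγ : Tendsto (fun m => ‖(γ m : F)‖) atTop (𝓝 0) :=
    squeeze_zero (fun _ => norm_nonneg _) (fun m => by simpa using (hγε m).le)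
      tendsto_one_div_add_atTop_nhds_zero_nat
  have hsphere : ∀ m, ‖(γ m : F)‖⁻¹ • (γ m : F) ∈ Metric.sphere (0 : F) 1 := fun m => by
    simp [norm_smul, hne m]
  obtain ⟨v, hv, φ, hφ, hlim⟩ := (isCompact_sphere (0 : F) 1).tendsto_subseq hsphere
  have hv0 : v ∈ Γ.linealSpace :=
    mem_linealSpace_of_tendsto_normalize hΓ (γ := fun m => (γ (φ m) : F)) (fun m => (γ (φ m)).2)
      (fun m => hne (φ m)) (hγ.comp hφ.tendsto_atTop) hlim
  rw [hlineal, Submodule.mem_bot] at hv0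
  simp [hv0] at hv

theorem exists_intValued_of_discreteTopology [FiniteDimensional ℝ F] [Nontrivial F]
    (Γ : AddSubgroup F) [DiscreteTopology Γ] :
    ∃ f : F →ₗ[ℝ] ℝ, f ≠ 0 ∧ ∀ γ ∈ Γ, ∃ m : ℤ, f γ = m := by
  let L := Γ.toIntSubmodule
  have : DiscreteTopology L := ‹DiscreteTopology Γ›
  by_cases hspan : Submodule.span ℝ (L : Set F) = ⊤
  · have : IsZLattice ℝ L := ⟨hspan⟩
    let b := Module.Free.chooseBasis ℤ L
    have : Nonempty (Module.Free.ChooseBasisIndex ℤ L) := by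
      rw [← Fintype.card_pos_iff, ← Module.finrank_eq_card_chooseBasisIndex, ZLattice.rank ℝ L]
      exact Module.finrank_pos
    let i := Classical.arbitrary (Module.Free.ChooseBasisIndex ℤ L)
    refine ⟨(b.ofZLatticeBasis ℝ L).coord i, fun h0 => ?_, fun γ hγ => ⟨b.repr ⟨γ, hγ⟩ i, ?_⟩⟩
    · simpa using LinearMap.congr_fun h0 (b.ofZLatticeBasis ℝ L i)
    · exact b.ofZLatticeBasis_repr_apply ℝ L ⟨γ, hγ⟩ i
  · obtain ⟨f, hf, hker⟩ := Submodule.exists_le_ker_of_lt_top _ (lt_top_iff_ne_top.mpr hspan)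
    exact ⟨f, hf, fun γ hγ => ⟨0, by simpa using hker (Submodule.subset_span hγ)⟩⟩

theorem exists_intValued_of_isClosed_ne_top [FiniteDimensional ℝ F] {H : AddSubgroup F}
    (hH : IsClosed (H : Set F)) (hne : H ≠ ⊤) :
    ∃ f : F →ₗ[ℝ] ℝ, f ≠ 0 ∧ ∀ h ∈ H, ∃ m : ℤ, f h = m := by
  obtain ⟨W, hUW⟩ := H.linealSpace.exists_isCompl
  let p := W.projectionOnto H.linealSpace hUW.symm
  let Γ : AddSubgroup W := H.comap W.subtype.toAddMonoidHom
  have hproj : ∀ h ∈ H, p h ∈ Γ := fun h hh => by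
    have : h - p h ∈ H.linealSpace := by
      rw [← W.ker_projectionOnto hUW.symm, LinearMap.mem_ker, map_sub,
        W.projectionOnto_apply_left, sub_self]
    show (p h : F) ∈ H
    simpa using H.sub_mem hh (mem_of_mem_linealSpace this)
  have : Nontrivial W := Submodule.nontrivial_iff_ne_bot.mpr fun hW => hne <|
    eq_top_iff.mpr fun h _ => mem_of_mem_linealSpace <| by
      simp [eq_top_of_isCompl_bot (hW ▸ hUW)]
  have : DiscreteTopology Γ :=
    discreteTopology_of_isClosed_of_linealSpace_eq_bot (hH.preimage continuous_subtype_val) <|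
      (Submodule.eq_bot_iff _).mpr fun w hw =>
        Subtype.ext <| (Submodule.disjoint_def.mp hUW.disjoint) w hw w.2
  obtain ⟨f, hf, hfΓ⟩ := Γ.exists_intValued_of_discreteTopology
  refine ⟨f ∘ₗ p, fun h0 => hf (LinearMap.ext fun w => ?_), fun h hh => hfΓ _ (hproj h hh)⟩
  simpa [p] using LinearMap.congr_fun h0 w

theorem dense_iff_forall_intValued_eq_zero [FiniteDimensional ℝ F] (G : AddSubgroup F) :
    Dense (G : Set F) ↔ ∀ f : F →ₗ[ℝ] ℝ, (∀ g ∈ G, ∃ m : ℤ, f g = m) → f = 0 := by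
  constructor
  · intro hG f hf
    have hcl : IsClosed (f ⁻¹' range ((↑) : ℤ → ℝ)) :=
      Int.isClosedEmbedding_coe_real.isClosed_range.preimage f.continuous_of_finiteDimensional
    have hall : ∀ y, f y ∈ range ((↑) : ℤ → ℝ) := fun y =>
      hcl.closure_subset_iff.mpr (fun g hg => (hf g hg).imp fun _ => Eq.symm) (hG y)
    ext y
    refine eq_zero_of_forall_mul_eq_intCast fun t => ?_
    obtain ⟨m, hm⟩ := hall (t • y)
    exact ⟨m, by simpa using hm.symm⟩
  · intro h
    by_contra hG
    have hne : G.topologicalClosure ≠ ⊤ := fun htop => hG <| by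
      rw [dense_iff_closure_eq, ← G.topologicalClosure_coe, htop, coe_top]
    obtain ⟨f, hf, hint⟩ := exists_intValued_of_isClosed_ne_top G.isClosed_topologicalClosure hne
    exact hf (h f fun g hg => hint g (G.le_topologicalClosure hg))

end AddSubgroup

def torusProj (ι : Type*) : (ι → ℝ) →+ (ι → AddCircle (1 : ℝ)) :=
  (QuotientAddGroup.mk' _).compLeft ι

section Torus

variable {ι : Type*}

theorem isOpenQuotientMap_torusProj : IsOpenQuotientMap (torusProj ι) :=
  ⟨.piMap fun _ => QuotientAddGroup.mk_surjective,
    continuous_pi fun i => (AddCircle.continuous_mk' 1).comp (continuous_apply i),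
    .piMap (fun _ => QuotientAddGroup.isOpenMap_coe)
      (Eventually.of_forall fun _ => QuotientAddGroup.mk_surjective)⟩

theorem mem_ker_torusProj {x : ι → ℝ} : x ∈ (torusProj ι).ker ↔ ∀ i, ∃ m : ℤ, (m : ℝ) = x i := by
  simp [torusProj, funext_iff, AddSubgroup.mem_zmultiples_iff]

theorem dense_orbit_iff_dense_range_sup_ker {E : Type*} [AddCommGroup E] [Module ℝ E]
    (Φ : E →ₗ[ℝ] ι → ℝ) (φ₀ : ι → AddCircle (1 : ℝ)) :
    Dense (range fun x i => φ₀ i + ((Φ x i : ℝ) : AddCircle (1 : ℝ))) ↔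
      Dense (((LinearMap.range Φ).toAddSubgroup ⊔ (torusProj ι).ker : AddSubgroup (ι → ℝ)) :
        Set (ι → ℝ)) := by
  have horbit : (range fun x i => φ₀ i + ((Φ x i : ℝ) : AddCircle (1 : ℝ))) =
      Homeomorph.addLeft φ₀ '' (torusProj ι '' range Φ) := by
    rw [image_image, ← range_comp]
    rfl
  have hsat : torusProj ι ⁻¹' (torusProj ι '' range Φ) =
      ((LinearMap.range Φ).toAddSubgroup ⊔ (torusProj ι).ker : AddSubgroup (ι → ℝ)) := by
    rw [← AddSubgroup.comap_map_eq]
    rfl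
  rw [horbit, (Homeomorph.addLeft φ₀).isDenseEmbedding.dense_image,
    ← isOpenQuotientMap_torusProj.dense_preimage_iff, hsat]

variable [Fintype ι]

def intDual (k : ι → ℤ) : (ι → ℝ) →ₗ[ℝ] ℝ := ∑ i, (k i : ℝ) • LinearMap.proj i

theorem intDual_apply (k : ι → ℤ) (y : ι → ℝ) : intDual k y = ∑ i, (k i : ℝ) * y i := by
  simp [intDual]

theorem intDual_single [DecidableEq ι] (k : ι → ℤ) (i : ι) : intDual k (Pi.single i 1) = k i := by
  simp [intDual_apply, Pi.single_apply]

theorem intDual_eq_zero_iff {k : ι → ℤ} : intDual k = 0 ↔ k = 0 := by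
  classical
  refine ⟨fun h => funext fun i => ?_, fun h => by ext; simp [intDual_apply, h]⟩
  simpa [intDual_single] using LinearMap.congr_fun h (Pi.single i 1)

theorem exists_eq_intDual {f : (ι → ℝ) →ₗ[ℝ] ℝ}
    (hf : ∀ z ∈ (torusProj ι).ker, ∃ m : ℤ, f z = m) : ∃ k : ι → ℤ, f = intDual k := by
  classical
  choose k hk using fun i => hf (Pi.single i 1) (mem_ker_torusProj.mpr fun j => by
    rcases eq_or_ne j i with rfl | hj
    · exact ⟨1, by simp⟩
    · exact ⟨0, by simp [hj]⟩)
  exact ⟨k, LinearMap.pi_ext' fun i => LinearMap.ext_ring (by simp [hk, intDual_single])⟩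

theorem intDual_intValued_sup_ker {k : ι → ℤ} {V : Submodule ℝ (ι → ℝ)}
    (hk : ∀ v ∈ V, intDual k v = 0) :
    ∀ g ∈ V.toAddSubgroup ⊔ (torusProj ι).ker, ∃ m : ℤ, intDual k g = m := by
  intro g hg
  obtain ⟨v, hv, z, hz, rfl⟩ := AddSubgroup.mem_sup.mp hg
  choose n hn using mem_ker_torusProj.mp hz
  refine ⟨∑ i, k i * n i, ?_⟩
  rw [map_add, hk v hv, zero_add, intDual_apply]
  simp [← hn]

end Torus

/-- An orbit of the ℝⁿ-action on 𝕋ᴺ = ℝᴺ/ℤᴺ given by a linear map Φ : ℝⁿ → ℝᴺ is dense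
iff no nonzero integral vector is orthogonal to Φ(ℝⁿ). -/
theorem orbit_dense_iff_no_integral_orthogonal (n N : ℕ)
    (Φ : (Fin n → ℝ) →ₗ[ℝ] (Fin N → ℝ)) (φ₀ : Fin N → AddCircle (1 : ℝ)) :
    Dense (Set.range fun x : Fin n → ℝ =>
        fun i => φ₀ i + ((Φ x i : ℝ) : AddCircle (1 : ℝ))) ↔
      ∀ k : Fin N → ℤ, (∀ x : Fin n → ℝ, ∑ i, (k i : ℝ) * Φ x i = 0) → k = 0 := by
  simp_rw [dense_orbit_iff_dense_range_sup_ker, AddSubgroup.dense_iff_forall_intValued_eq_zero,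
    ← intDual_apply]
  constructor
  · intro h k hk
    exact intDual_eq_zero_iff.mp <| h _ <| intDual_intValued_sup_ker <| by
      rintro _ ⟨x, rfl⟩
      exact hk x
  · intro h f hf
    obtain ⟨k, rfl⟩ := exists_eq_intDual fun z hz => hf z (AddSubgroup.mem_sup_right hz)
    refine intDual_eq_zero_iff.mpr (h k fun x => eq_zero_of_forall_mul_eq_intCast fun t => ?_)
    obtain ⟨m, hm⟩ := hf (t • Φ x) (AddSubgroup.mem_sup_left ⟨t • x, map_smul Φ t x⟩)
    exact ⟨m, by simpa using hm⟩
end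

section
/- (Weyl equidistribution for multidimensional orbits, continuous case) Let Φ : ℝⁿ → ℝᴺ be linear such that no nonzero integral vector is orthogonal to Φ(ℝⁿ), let f : 𝕋ᴺ → ℂ be continuous, let φ₀ ∈ 𝕋ᴺ, and let Ω ⊆ ℝⁿ be a bounded measurable set of positive volume. Then (1/Vol(λΩ)) ∫_{λΩ} f(φ₀ + Φ(x)) dx → ∫_{𝕋ᴺ} f(φ) dφ as λ → ∞, where the integral on the right is with respect to normalized Haar measure on 𝕋ᴺ. -/
open MeasureTheory Filter
open scoped Pointwise

/-!
The averages are integrals of `f` against the probability measures `ν_λ`, the pushforwards of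
the uniform measure on `Ω` under `y ↦ φ₀ + Φ(λy)`. Integration against a probability measure is
1-Lipschitz on `C(𝕋ᴺ, ℂ)`, so it suffices to test convergence on the characters `e_k`, whose
span is dense. For `k ≠ 0`, the integral of `e_k` against `ν_λ` is `e_k(φ₀)` times the Fourier
transform of the uniform measure on `Ω` at `λ • (k ∘ Φ)`; the hypothesis on `Φ` says that the
functional `k ∘ Φ` is nonzero, so this tends to `0 = ∫ e_k` by the Riemann–Lebesgue lemma.
-/

open Complex Topology ProbabilityTheory
open scoped Real FourierTransform

section WeylCriterion

variable {X ι : Type*} [TopologicalSpace X] [CompactSpace X] [MeasurableSpace X]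
  [OpensMeasurableSpace X]

theorem ContinuousMap.integrable (μ : Measure X) [IsFiniteMeasure μ] (g : C(X, ℂ)) :
    Integrable g μ :=
  (BoundedContinuousFunction.mkOfCompact g).integrable μ

theorem ContinuousMap.lipschitzWith_integral (μ : Measure X) [IsProbabilityMeasure μ] :
    LipschitzWith 1 fun g : C(X, ℂ) => ∫ x, g x ∂μ := by
  refine LipschitzWith.of_dist_le_mul fun g h => ?_
  rw [NNReal.coe_one, one_mul, dist_eq_norm, dist_eq_norm,
    ← integral_sub (g.integrable μ) (h.integrable μ)]
  simpa only [BoundedContinuousFunction.norm_mkOfCompact,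
    BoundedContinuousFunction.mkOfCompact_apply, ContinuousMap.sub_apply] using
    (BoundedContinuousFunction.mkOfCompact (g - h)).norm_integral_le_norm μ

theorem tendsto_integral_of_dense_span {ν : ι → Measure X} [∀ i, IsProbabilityMeasure (ν i)]
    {μ : Measure X} [IsProbabilityMeasure μ] {l : Filter ι} {D : Set C(X, ℂ)}
    (hD : (Submodule.span ℂ D).topologicalClosure = ⊤)
    (h : ∀ g ∈ D, Tendsto (fun i => ∫ x, g x ∂ν i) l (𝓝 (∫ x, g x ∂μ))) (g : C(X, ℂ)) :
    Tendsto (fun i => ∫ x, g x ∂ν i) l (𝓝 (∫ x, g x ∂μ)) := by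
  let S : Submodule ℂ C(X, ℂ) :=
    { carrier := {g | Tendsto (fun i => ∫ x, g x ∂ν i) l (𝓝 (∫ x, g x ∂μ))}
      add_mem' := fun {g h} hg hh => by
        simp only [Set.mem_ofPred_eq, ContinuousMap.coe_add, Pi.add_apply,
          integral_add (g.integrable _) (h.integrable _)]
        exact hg.add hh
      zero_mem' := by simpa using tendsto_const_nhds
      smul_mem' := fun a g hg => by
        simp only [Set.mem_ofPred_eq, ContinuousMap.coe_smul, Pi.smul_apply, integral_smul]
        exact hg.const_smul a }
  have hS : IsClosed (S : Set C(X, ℂ)) :=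
    (LipschitzWith.uniformEquicontinuous _ 1 fun i =>
      ContinuousMap.lipschitzWith_integral (ν i)).equicontinuous.isClosed_setOfPred_tendsto
      (ContinuousMap.lipschitzWith_integral μ).continuous
  have hDS := Submodule.topologicalClosure_minimal _ (Submodule.span_le.2 h : _ ≤ S) hS
  exact hDS (hD ▸ Submodule.mem_top)

end WeylCriterion

theorem tendsto_smul_const_atTop_cobounded {E : Type*} [NormedAddCommGroup E] [NormedSpace ℝ E]
    {x : E} (hx : x ≠ 0) : Tendsto (fun t : ℝ => t • x) atTop (Bornology.cobounded E) := by
  rw [← tendsto_norm_atTop_iff_cobounded]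
  simp_rw [norm_smul, Real.norm_eq_abs]
  exact tendsto_abs_atTop_atTop.atTop_mul_const (norm_pos_iff.2 hx)

section AddHaar

variable {V : Type*} [NormedAddCommGroup V] [NormedSpace ℝ V] [FiniteDimensional ℝ V]
  [MeasurableSpace V] [BorelSpace V]

theorem tendsto_integral_fourierChar_mul_atTop (μ : Measure V) [μ.IsAddHaarMeasure]
    {ν : Measure V} [IsFiniteMeasure ν] (hν : ν ≪ μ) {L : StrongDual ℝ V} (hL : L ≠ 0) :
    Tendsto (fun t : ℝ => ∫ v, (𝐞 (t * L v) : ℂ) ∂ν) atTop (𝓝 0) := by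
  refine ((tendsto_integral_exp_smul_cocompact (fun v => ((ν.rnDeriv μ v).toReal : ℂ)) μ).comp
    (Metric.cobounded_eq_cocompact (α := StrongDual ℝ V) ▸
      tendsto_smul_const_atTop_cobounded (neg_ne_zero.2 hL))).congr fun t => ?_
  rw [Function.comp_apply, ← integral_rnDeriv_smul hν]
  congr 1 with v
  simp [Circle.smul_def, Complex.real_smul, mul_comm]

theorem MeasureTheory.Measure.setAverage_smul_set {F : Type*} [NormedAddCommGroup F]
    [NormedSpace ℝ F] (μ : Measure V) [μ.IsAddHaarMeasure] (g : V → F) (s : Set V) {r : ℝ}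
    (hr : r ≠ 0) : ⨍ x in r • s, g x ∂μ = ⨍ y in s, g (r • y) ∂μ := by
  rw [setAverage_eq, setAverage_eq, Measure.setIntegral_comp_smul μ g s hr, smul_smul,
    measureReal_def, measureReal_def, Measure.addHaar_smul, ENNReal.toReal_mul,
    ENNReal.toReal_ofReal (abs_nonneg _), mul_inv, abs_inv, mul_comm]

end AddHaar

instance : IsProbabilityMeasure (volume : Measure UnitAddCircle) :=
  ⟨by simp [AddCircle.measure_univ]⟩

theorem integral_fourier_unitAddCircle (m : ℤ) :
    ∫ x : UnitAddCircle, fourier m x = if m = 0 then 1 else 0 := by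
  split_ifs with hm
  · simp [hm]
  · exact integral_eq_zero_of_add_right_eq_neg (fourier_add_half_inv_index hm one_pos)

namespace UnitAddTorus

variable {d : Type*} [Fintype d]

theorem integral_mFourier (k : d → ℤ) :
    ∫ x : UnitAddTorus d, mFourier k x = if k = 0 then 1 else 0 := by
  rw [volume_pi, mFourier, ContinuousMap.coe_mk,
    integral_fintype_prod_eq_prod (fun i x => fourier (k i) x)]
  simp_rw [integral_fourier_unitAddCircle]
  by_cases hk : k = 0
  · simp [hk]
  · obtain ⟨i, hi⟩ := Function.ne_iff.1 hk
    rw [if_neg hk]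
    exact Finset.prod_eq_zero (Finset.mem_univ i) (if_neg hi)

theorem mFourier_add_coe (k : d → ℤ) (φ : UnitAddTorus d) (r : d → ℝ) :
    mFourier k (fun i => φ i + (r i : UnitAddCircle)) = mFourier k φ * 𝐞 (∑ i, k i * r i) := by
  simp only [mFourier, ContinuousMap.coe_mk, fourier_apply, smul_add, AddCircle.toCircle_add,
    Circle.coe_mul, Finset.prod_mul_distrib, fourier_coe_apply', Real.fourierChar_apply,
    ← Complex.exp_sum]
  congr 2
  push_cast
  rw [Finset.mul_sum, Finset.sum_mul]
  exact Finset.sum_congr rfl fun i _ => by ring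

theorem tendsto_integral_mFourier_linearOrbit {V : Type*} [NormedAddCommGroup V]
    [NormedSpace ℝ V] [FiniteDimensional ℝ V] [MeasurableSpace V] [BorelSpace V]
    (μ : Measure V) [μ.IsAddHaarMeasure] {Φ : V →ₗ[ℝ] (d → ℝ)}
    (hΦ : ∀ k : d → ℤ, (∀ x, ∑ i, (k i : ℝ) * Φ x i = 0) → k = 0)
    (φ₀ : UnitAddTorus d) {ρ : Measure V} [IsProbabilityMeasure ρ] (hρ : ρ ≪ μ) (k : d → ℤ) :
    Tendsto (fun t : ℝ => ∫ y, mFourier k (fun i => φ₀ i + (Φ (t • y) i : UnitAddCircle)) ∂ρ)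
      atTop (𝓝 (∫ φ, mFourier k φ)) := by
  rw [integral_mFourier]
  split_ifs with hk
  · simp [hk, mFourier_zero]
  let L : StrongDual ℝ V :=
    LinearMap.toContinuousLinearMap (∑ i, (k i : ℝ) • (LinearMap.proj i ∘ₗ Φ))
  have hL : L ≠ 0 := fun h => hk (hΦ k fun x => by simpa [L] using congr($h x))
  have horbit (t : ℝ) (y : V) :
      mFourier k (fun i => φ₀ i + (Φ (t • y) i : UnitAddCircle)) = mFourier k φ₀ * 𝐞 (t * L y) := by
    simp [mFourier_add_coe, L, Finset.mul_sum, mul_left_comm]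
  simp_rw [horbit, integral_const_mul]
  simpa using (tendsto_integral_fourierChar_mul_atTop μ hρ hL).const_mul (mFourier k φ₀)

end UnitAddTorus

theorem weyl_equidistribution_continuous_general (n N : ℕ)
    (Φ : (Fin n → ℝ) →ₗ[ℝ] (Fin N → ℝ))
    (hΦ : ∀ k : Fin N → ℤ, (∀ x : Fin n → ℝ, ∑ i, (k i : ℝ) * Φ x i = 0) → k = 0)
    (f : (Fin N → AddCircle (1 : ℝ)) → ℂ) (hf : Continuous f)
    (φ₀ : Fin N → AddCircle (1 : ℝ))
    (Ω : Set (Fin n → ℝ)) (hΩb : Bornology.IsBounded Ω)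
    (hΩv : 0 < volume Ω) :
    Tendsto (fun lam : ℝ =>
        ((volume (lam • Ω)).toReal)⁻¹ •
          ∫ x in lam • Ω, f (fun i => φ₀ i + ((Φ x i : ℝ) : AddCircle (1 : ℝ))))
      atTop (nhds (∫ φ, f φ)) := by
  have := cond_isProbabilityMeasure_of_finite hΩv.ne' hΩb.measure_lt_top.ne
  let orbit (t : ℝ) (y : Fin n → ℝ) : UnitAddTorus (Fin N) :=
    fun i => φ₀ i + (Φ (t • y) i : UnitAddCircle)
  have hΦ_cont := Φ.continuous_of_finiteDimensional
  have horbit (t : ℝ) : Measurable (orbit t) := by fun_prop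
  have (t : ℝ) := Measure.isProbabilityMeasure_map (μ := volume[|Ω]) (horbit t).aemeasurable
  have hweyl := tendsto_integral_of_dense_span (ν := fun t => (volume[|Ω]).map (orbit t))
    UnitAddTorus.span_mFourier_closure_eq_top (by
      rintro _ ⟨k, rfl⟩
      simpa only [integral_map (horbit _).aemeasurable
        (ContinuousMap.continuous _).aestronglyMeasurable] using
        UnitAddTorus.tendsto_integral_mFourier_linearOrbit volume hΦ φ₀ cond_absolutelyContinuous k)
    ⟨f, hf⟩
  refine hweyl.congr' ?_
  filter_upwards [eventually_ne_atTop 0] with t ht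
  rw [ContinuousMap.coe_mk, integral_map (horbit t).aemeasurable hf.aestronglyMeasurable,
    ← measureReal_def, ← setAverage_eq, Measure.setAverage_smul_set volume _ _ ht, setAverage_eq']
  rfl

/-- Weyl equidistribution for multidimensional orbits, continuous case: the averages of a
continuous function over dilates λΩ along the orbit converge to the space average over 𝕋ᴺ. -/
theorem weyl_equidistribution_continuous (n N : ℕ)
    (Φ : (Fin n → ℝ) →ₗ[ℝ] (Fin N → ℝ))
    (hΦ : ∀ k : Fin N → ℤ, (∀ x : Fin n → ℝ, ∑ i, (k i : ℝ) * Φ x i = 0) → k = 0)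
    (f : (Fin N → AddCircle (1 : ℝ)) → ℂ) (hf : Continuous f)
    (φ₀ : Fin N → AddCircle (1 : ℝ))
    (Ω : Set (Fin n → ℝ)) (hΩm : MeasurableSet Ω) (hΩb : Bornology.IsBounded Ω)
    (hΩv : 0 < volume Ω) :
    Tendsto (fun lam : ℝ =>
        ((volume (lam • Ω)).toReal)⁻¹ •
          ∫ x in lam • Ω, f (fun i => φ₀ i + ((Φ x i : ℝ) : AddCircle (1 : ℝ))))
      atTop (nhds (∫ φ, f φ)) :=
  weyl_equidistribution_continuous_general n N Φ hΦ f hf φ₀ Ω hΩb hΩv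
end

section
/- (Weyl equidistribution, character case) Let Φ : ℝⁿ → ℝᴺ be linear such that no nonzero integral vector is orthogonal to Φ(ℝⁿ). For every nonzero m ∈ ℤᴺ, every φ₀ ∈ ℝᴺ, and every bounded measurable Ω ⊆ ℝⁿ of positive volume, (1/Vol(λΩ)) ∫_{λΩ} exp(2πi ⟨m, φ₀ + Φ(x)⟩) dx → 0 as λ → ∞. -/
open MeasureTheory Filter
open scoped Pointwise

/-- Weyl equidistribution, character case: for a nonzero integral vector m, the averages of the
character exp(2πi⟨m, φ₀ + Φ(x)⟩) over dilates λΩ tend to 0. -/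
theorem weyl_equidistribution_character (n N : ℕ)
    (Φ : (Fin n → ℝ) →ₗ[ℝ] (Fin N → ℝ))
    (hΦ : ∀ k : Fin N → ℤ, (∀ x : Fin n → ℝ, ∑ i, (k i : ℝ) * Φ x i = 0) → k = 0)
    (m : Fin N → ℤ) (hm : m ≠ 0) (φ₀ : Fin N → ℝ)
    (Ω : Set (Fin n → ℝ)) (hΩm : MeasurableSet Ω) (hΩb : Bornology.IsBounded Ω)
    (hΩv : 0 < volume Ω) :
    Tendsto (fun lam : ℝ =>
        ((volume (lam • Ω)).toReal)⁻¹ •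
          ∫ x in lam • Ω,
            Complex.exp (2 * Real.pi * Complex.I *
              ((∑ i, (m i : ℝ) * (φ₀ i + Φ x i) : ℝ) : ℂ)))
      atTop (nhds 0) := by
  classical
  set d : ℕ := Module.finrank ℝ (Fin n → ℝ) with hd
  -- the nonzero linear functional L x = ∑ m i * Φ x i
  set l : (Fin n → ℝ) →ₗ[ℝ] ℝ :=
    { toFun := fun x => ∑ i, (m i : ℝ) * Φ x i
      map_add' := by
        intro x y
        simp [mul_add, Finset.sum_add_distrib]
      map_smul' := by
        intro c x
        simp [Finset.mul_sum, mul_left_comm] } with hl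
  set L : (Fin n → ℝ) →L[ℝ] ℝ := LinearMap.toContinuousLinearMap l with hLdef
  have hLapp : ∀ x, L x = ∑ i, (m i : ℝ) * Φ x i := by
    intro x; simp [hLdef, hl]
  have hL : L ≠ 0 := by
    intro h
    apply hm
    apply hΦ
    intro x
    have := congrArg (fun T : (Fin n → ℝ) →L[ℝ] ℝ => T x) h
    simpa [hLapp x] using this
  set c : ℝ := ∑ i, (m i : ℝ) * φ₀ i with hc
  set v : ℝ := (volume Ω).toReal with hv
  have hvpos : 0 < v := ENNReal.toReal_pos hΩv.ne' hΩb.measure_lt_top.ne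
  -- the frequencies (-lam) • L go to cocompact
  have hcob : Tendsto (fun lam : ℝ => (-lam) • L) atTop
      (Filter.cocompact ((Fin n → ℝ) →L[ℝ] ℝ)) := by
    rw [← Metric.cobounded_eq_cocompact, ← comap_norm_atTop, tendsto_comap_iff]
    have : (norm ∘ fun lam : ℝ => (-lam) • L) = fun lam : ℝ => |lam| * ‖L‖ := by
      ext lam
      have h : ‖(-lam) • L‖ = ‖-lam‖ * ‖L‖ := norm_smul (-lam) L
      rw [Function.comp_apply, h, norm_neg, Real.norm_eq_abs]
    rw [this]
    exact tendsto_abs_atTop_atTop.atTop_mul_const (norm_pos_iff.mpr hL)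
  -- Riemann-Lebesgue
  have hRL := (tendsto_integral_exp_smul_cocompact
    (f := Set.indicator Ω (fun _ => (1 : ℂ))) (volume)).comp hcob
  have hF : Tendsto (fun lam : ℝ =>
      ∫ x in Ω, Complex.exp (2 * Real.pi * Complex.I * ((lam * L x : ℝ) : ℂ)))
      atTop (nhds 0) := by
    refine hRL.congr fun lam => ?_
    rw [← integral_indicator hΩm]
    refine integral_congr_ae (MeasureTheory.ae_of_all _ fun x => ?_)
    by_cases hx : x ∈ Ω
    · beta_reduce
      rw [Set.indicator_of_mem hx, Set.indicator_of_mem hx,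
        ContinuousLinearMap.smul_apply, Circle.smul_def, Real.fourierChar_apply,
        smul_eq_mul, mul_one]
      congr 1
      push_cast [smul_eq_mul]
      ring
    · simp [Set.indicator_of_notMem hx]
  -- the limit function
  have hlim : Tendsto (fun lam : ℝ =>
      (v⁻¹ : ℝ) • (Complex.exp (2 * Real.pi * Complex.I * (c : ℂ)) *
        ∫ x in Ω, Complex.exp (2 * Real.pi * Complex.I * ((lam * L x : ℝ) : ℂ))))
      atTop (nhds 0) := by
    have := (hF.const_mul (Complex.exp (2 * Real.pi * Complex.I * (c : ℂ)))).const_smul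
      (v⁻¹ : ℝ)
    simpa using this
  refine Tendsto.congr' ?_ hlim
  filter_upwards [eventually_gt_atTop (0 : ℝ)] with lam hlam
  refine Eq.symm ?_
  have hpow : (0 : ℝ) < lam ^ d := pow_pos hlam d
  -- volume of the dilate
  have hvol : (volume (lam • Ω)).toReal = lam ^ d * v := by
    rw [Measure.addHaar_smul_of_nonneg volume hlam.le, ENNReal.toReal_mul,
      ENNReal.toReal_ofReal hpow.le, hv, hd]
  -- splitting the character
  have hchar : ∀ x : Fin n → ℝ,
      Complex.exp (2 * Real.pi * Complex.I *
          ((∑ i, (m i : ℝ) * (φ₀ i + Φ x i) : ℝ) : ℂ))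
        = Complex.exp (2 * Real.pi * Complex.I * (c : ℂ)) *
          Complex.exp (2 * Real.pi * Complex.I * ((L x : ℝ) : ℂ)) := by
    intro x
    rw [← Complex.exp_add, ← mul_add, ← Complex.ofReal_add]
    congr 3
    rw [hc, hLapp x, ← Finset.sum_add_distrib]
    exact Finset.sum_congr rfl fun i _ => mul_add _ _ _
  -- substitution
  have hsub : ∫ x in lam • Ω, Complex.exp (2 * Real.pi * Complex.I * ((L x : ℝ) : ℂ))
      = (lam ^ d : ℝ) •
        ∫ x in Ω, Complex.exp (2 * Real.pi * Complex.I * ((lam * L x : ℝ) : ℂ)) := by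
    have h1' : ∫ x in Ω, Complex.exp (2 * Real.pi * Complex.I * ((lam * L x : ℝ) : ℂ))
        = ((lam ^ d : ℝ))⁻¹ •
          ∫ x in lam • Ω, Complex.exp (2 * Real.pi * Complex.I * ((L x : ℝ) : ℂ)) := by
      have h1 := Measure.setIntegral_comp_smul_of_pos volume
        (fun y => Complex.exp (2 * Real.pi * Complex.I * ((L y : ℝ) : ℂ))) Ω hlam
      simp only [_root_.map_smul, smul_eq_mul] at h1
      rw [hd]
      exact h1
    rw [h1', smul_smul, mul_inv_cancel₀ hpow.ne', one_smul]
  calc ((volume (lam • Ω)).toReal)⁻¹ •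
        ∫ x in lam • Ω, Complex.exp (2 * Real.pi * Complex.I *
          ((∑ i, (m i : ℝ) * (φ₀ i + Φ x i) : ℝ) : ℂ))
      = ((lam ^ d * v)⁻¹ : ℝ) •
        (Complex.exp (2 * Real.pi * Complex.I * (c : ℂ)) *
          ∫ x in lam • Ω, Complex.exp (2 * Real.pi * Complex.I * ((L x : ℝ) : ℂ))) := by
        rw [hvol]
        congr 1
        simp_rw [hchar]
        rw [integral_const_mul]
    _ = (v⁻¹ : ℝ) • (Complex.exp (2 * Real.pi * Complex.I * (c : ℂ)) *
          ∫ x in Ω, Complex.exp (2 * Real.pi * Complex.I * ((lam * L x : ℝ) : ℂ))) := by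
        rw [hsub, mul_smul_comm, smul_smul, mul_inv]
        congr 1
        field_simp
end

section
/- Let Φ : ℝⁿ → ℝᴺ be linear with m ∈ ℤᴺ a vector such that the linear functional x ↦ ⟨m, Φ(x)⟩ on ℝⁿ is nonzero. Then for any ball B = B(a, R) ⊆ ℝⁿ, |∫_B exp(2πi ⟨m, Φ(x)⟩) dx| ≤ C(m, Φ) · Rⁿ⁻¹ for a constant C(m,Φ) independent of a and R (for R ≥ 1); consequently (1/Vol(B(0,λ))) ∫_{B(0,λ)} exp(2πi ⟨m, Φ(x)⟩) dx → 0 as λ → ∞. -/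
open MeasureTheory Filter Topology Metric Set Function

/-! If `ℓ v = 1 / 2`, then `e(x) = exp (2πi ℓ x)` satisfies `e (x + v) = -e x`, so translating the
ball `B(a, R)` by `-v` negates the integral of `e`. Twice the integral is therefore the difference
of the integrals over two balls of radius `R` with centres `‖v‖` apart, which is bounded by the
measure of their symmetric difference. That set lies in two translates of the shell
`B(a, R) \ B(a, R - ‖v‖)`, whose volume is `O(Rⁿ⁻¹)`. -/

section SetIntegralSdiff

variable {X E : Type*} [MeasurableSpace X] [NormedAddCommGroup E] [NormedSpace ℝ E]
  {μ : Measure X} {f : X → E} {s t : Set X} {M : ℝ}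

theorem norm_setIntegral_sub_setIntegral_le (hs : MeasurableSet s) (ht : MeasurableSet t)
    (hμs : μ s ≠ ⊤) (hμt : μ t ≠ ⊤) (hf : AEStronglyMeasurable f μ) (hM : ∀ x, ‖f x‖ ≤ M) :
    ‖∫ x in s, f x ∂μ - ∫ x in t, f x ∂μ‖ ≤ M * (μ.real (s \ t) + μ.real (t \ s)) := by
  have hfs : IntegrableOn f s μ := Measure.integrableOn_of_bounded hμs hf (ae_of_all _ hM)
  have hft : IntegrableOn f t μ := Measure.integrableOn_of_bounded hμt hf (ae_of_all _ hM)
  rw [← integral_inter_add_sdiff ht hfs, ← integral_inter_add_sdiff hs hft, inter_comm t s,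
    add_sub_add_left_eq_sub, mul_add]
  refine (norm_sub_le _ _).trans (add_le_add ?_ ?_) <;>
    refine norm_setIntegral_le_of_norm_le_const ?_ fun x _ => hM x
  exacts [(measure_mono sdiff_subset).trans_lt hμs.lt_top,
    (measure_mono sdiff_subset).trans_lt hμt.lt_top]

end SetIntegralSdiff

theorem Metric.ball_sdiff_ball_subset {Y : Type*} [PseudoMetricSpace Y] (a b : Y) (R : ℝ) :
    ball a R \ ball b R ⊆ ball a R \ ball a (R - dist a b) := by
  refine sdiff_subset_sdiff_right fun x hx => mem_ball.2 ?_
  linarith [mem_ball.1 hx, dist_triangle x a b]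

section Antiperiodic

variable {G E : Type*} [NormedAddCommGroup G] [MeasurableSpace G] [BorelSpace G]
  [NormedAddCommGroup E] [NormedSpace ℝ E] {μ : Measure G} [μ.IsAddRightInvariant]
  {f : G → E} {v : G}

theorem Function.Antiperiodic.setIntegral_preimage_add_right (hf : Antiperiodic f v)
    (s : Set G) : ∫ x in (· + v) ⁻¹' s, f x ∂μ = -∫ x in s, f x ∂μ :=
  calc ∫ x in (· + v) ⁻¹' s, f x ∂μ = -∫ x in (· + v) ⁻¹' s, f (x + v) ∂μ := by
        simp only [hf _, integral_neg, neg_neg]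
    _ = -∫ x in s, f x ∂μ := by
        rw [(measurePreserving_add_right μ v).setIntegral_preimage_emb
          (measurableEmbedding_addRight v)]

theorem Function.Antiperiodic.norm_setIntegral_ball_le [ProperSpace G]
    [IsFiniteMeasureOnCompacts μ] {M : ℝ} (hf : Antiperiodic f v)
    (hmeas : AEStronglyMeasurable f μ) (hM : ∀ x, ‖f x‖ ≤ M) (a : G) (R : ℝ) :
    ‖∫ x in ball a R, f x ∂μ‖ ≤ M * μ.real (ball a R \ ball a (R - ‖v‖)) := by
  have hdist : dist a (a - v) = ‖v‖ := by simp
  have hneg : ∫ x in ball (a - v) R, f x ∂μ = -∫ x in ball a R, f x ∂μ := by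
    rw [← preimage_add_right_ball, hf.setIntegral_preimage_add_right]
  have h₁ : μ.real (ball a R \ ball (a - v) R) ≤ μ.real (ball a R \ ball a (R - ‖v‖)) :=
    measureReal_mono (hdist ▸ ball_sdiff_ball_subset a (a - v) R)
      ((measure_mono sdiff_subset).trans_lt measure_ball_lt_top).ne
  have h₂ : μ.real (ball (a - v) R \ ball a R) ≤ μ.real (ball a R \ ball a (R - ‖v‖)) := by
    calc _ ≤ μ.real (ball (a - v) R \ ball (a - v) (R - ‖v‖)) :=
          measureReal_mono (by simpa [dist_comm] using ball_sdiff_ball_subset (a - v) a R)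
            ((measure_mono sdiff_subset).trans_lt measure_ball_lt_top).ne
      _ = μ.real ((· + v) ⁻¹' (ball a R \ ball a (R - ‖v‖))) := by
          simp only [preimage_sdiff, preimage_add_right_ball]
      _ = _ := by simp only [measureReal_def, measure_preimage_add_right]
  have key := norm_setIntegral_sub_setIntegral_le (μ := μ) measurableSet_ball measurableSet_ball
    measure_ball_lt_top.ne measure_ball_lt_top.ne hmeas hM (s := ball a R) (t := ball (a - v) R)
  rw [hneg, sub_neg_eq_add, ← two_smul ℝ, norm_smul, Real.norm_two] at key
  have hM0 : 0 ≤ M := (norm_nonneg _).trans (hM a)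
  nlinarith [mul_le_mul_of_nonneg_left (add_le_add h₁ h₂) hM0]

end Antiperiodic

section Cube

variable {ι : Type*} [Fintype ι] [Nonempty ι]

theorem Real.volume_real_pi_ball (a : ι → ℝ) (r : ℝ) :
    volume.real (ball a r) = (2 * max r 0) ^ Fintype.card ι := by
  rcases lt_or_ge 0 r with hr | hr
  · rw [measureReal_def, Real.volume_pi_ball a hr, ENNReal.toReal_ofReal (by positivity),
      max_eq_left hr.le]
  · rw [ball_eq_empty.2 hr, max_eq_right hr, measureReal_empty, mul_zero,
      zero_pow Fintype.card_ne_zero]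

theorem Real.volume_real_pi_ball_sdiff_ball_le (a : ι → ℝ) {R d : ℝ} (hR : 0 ≤ R) (hd : 0 ≤ d) :
    volume.real (ball a R \ ball a (R - d)) ≤
      Fintype.card ι * 2 ^ Fintype.card ι * d * R ^ (Fintype.card ι - 1) := by
  set k := Fintype.card ι
  have hk : k - 1 + 1 = k := Nat.sub_add_cancel Fintype.card_pos
  have hs : 0 ≤ max (R - d) 0 := le_max_right _ _
  have hsR : max (R - d) 0 ≤ R := max_le (by linarith) hR
  rw [measureReal_sdiff (ball_subset_ball (by linarith)) measurableSet_ball,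
    volume_real_pi_ball, volume_real_pi_ball, max_eq_left hR]
  calc (2 * R) ^ k - (2 * max (R - d) 0) ^ k
      ≤ |2 * R - 2 * max (R - d) 0| * k * max |2 * R| |2 * max (R - d) 0| ^ (k - 1) :=
        le_of_abs_le (abs_pow_sub_pow_le _ _ _)
    _ ≤ 2 * d * k * (2 * R) ^ (k - 1) := by
        rw [abs_of_nonneg (by linarith), abs_of_nonneg (by positivity),
          abs_of_nonneg (by positivity), max_eq_left (by linarith : 2 * max (R - d) 0 ≤ 2 * R)]
        gcongr
        linarith [le_max_left (R - d) 0]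
    _ = k * 2 ^ k * d * R ^ (k - 1) := by
        rw [mul_pow, ← hk, pow_succ', Nat.add_sub_cancel]
        ring

end Cube

theorem Function.antiperiodic_exp_two_pi_I_mul {G : Type*} [Add G] {ℓ : G → ℝ} {v : G}
    (hℓ : ∀ x, ℓ (x + v) = ℓ x + 1 / 2) :
    Antiperiodic (fun x => Complex.exp (2 * Real.pi * Complex.I * (ℓ x : ℂ))) v := by
  intro x
  have h : 2 * Real.pi * Complex.I * ((ℓ x + 1 / 2 : ℝ) : ℂ) =
      2 * Real.pi * Complex.I * (ℓ x : ℂ) + Real.pi * Complex.I := by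
    push_cast; ring
  simp only [hℓ, h, Complex.exp_antiperiodic _]

theorem norm_exp_two_pi_I_mul_ofReal (t : ℝ) :
    ‖Complex.exp (2 * Real.pi * Complex.I * (t : ℂ))‖ = 1 := by
  rw [show 2 * Real.pi * Complex.I * (t : ℂ) = ((2 * Real.pi * t : ℝ) : ℂ) * Complex.I by
    push_cast; ring, Complex.norm_exp_ofReal_mul_I]

theorem exists_norm_integral_ball_exp_two_pi_I_le {ι : Type*} [Fintype ι] [Nonempty ι]
    (ℓ : (ι → ℝ) →ₗ[ℝ] ℝ) (hℓ : ℓ ≠ 0) :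
    ∃ C, ∀ (a : ι → ℝ) (R : ℝ), 0 ≤ R →
      ‖∫ x in ball a R, Complex.exp (2 * Real.pi * Complex.I * (ℓ x : ℂ))‖ ≤
        C * R ^ (Fintype.card ι - 1) := by
  obtain ⟨v, hv⟩ := LinearMap.surjective_of_ne_zero hℓ (1 / 2)
  have hanti := antiperiodic_exp_two_pi_I_mul (ℓ := ℓ) (v := v) fun x => by rw [map_add, hv]
  have hmeas : AEStronglyMeasurable (fun x => Complex.exp (2 * Real.pi * Complex.I * (ℓ x : ℂ)))
      volume := by fun_prop
  refine ⟨Fintype.card ι * 2 ^ Fintype.card ι * ‖v‖, fun a R hR =>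
    (hanti.norm_setIntegral_ball_le hmeas (fun x => (norm_exp_two_pi_I_mul_ofReal _).le) a R).trans ?_⟩
  rw [one_mul]
  exact Real.volume_real_pi_ball_sdiff_ball_le a hR (norm_nonneg v)

theorem tendsto_inv_volume_ball_smul_zero {ι E : Type*} [Fintype ι] [Nonempty ι]
    [NormedAddCommGroup E] [NormedSpace ℝ E] {F : ℝ → E} {C : ℝ}
    (hF : ∀ᶠ r in atTop, ‖F r‖ ≤ C * r ^ (Fintype.card ι - 1)) :
    Tendsto (fun r => (volume (ball (0 : ι → ℝ) r)).toReal⁻¹ • F r) atTop (𝓝 0) := by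
  set k := Fintype.card ι
  have hk : k - 1 + 1 = k := Nat.sub_add_cancel Fintype.card_pos
  refine squeeze_zero_norm' ?_ (by simpa using tendsto_inv_atTop_zero.const_mul (C / 2 ^ k))
  filter_upwards [hF, eventually_gt_atTop 0] with r hFr hr
  rw [← measureReal_def, Real.volume_real_pi_ball, max_eq_left hr.le, norm_smul, norm_inv,
    Real.norm_of_nonneg (by positivity)]
  calc ((2 * r) ^ k)⁻¹ * ‖F r‖ ≤ ((2 * r) ^ k)⁻¹ * (C * r ^ (k - 1)) := by gcongr
    _ = C / 2 ^ k * r⁻¹ := by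
        rw [mul_pow, ← hk, pow_succ, Nat.add_sub_cancel]
        field_simp
        ring

/-- Oscillatory integral estimate: if ⟨m, Φ(·)⟩ is a nonzero linear functional, then the integral
of exp(2πi⟨m, Φ(x)⟩) over any ball B(a,R), R ≥ 1, is O(Rⁿ⁻¹) uniformly in a; consequently the
ball averages tend to 0. -/
theorem oscillatory_integral_ball_estimate (n N : ℕ)
    (Φ : (Fin n → ℝ) →ₗ[ℝ] (Fin N → ℝ)) (m : Fin N → ℤ)
    (hm : ∃ x : Fin n → ℝ, ∑ i, (m i : ℝ) * Φ x i ≠ 0) :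
    (∃ C : ℝ, ∀ (a : Fin n → ℝ) (R : ℝ), 1 ≤ R →
        ‖∫ x in Metric.ball a R,
            Complex.exp (2 * Real.pi * Complex.I * ((∑ i, (m i : ℝ) * Φ x i : ℝ) : ℂ))‖ ≤
          C * R ^ ((n : ℝ) - 1)) ∧
      Tendsto (fun lam : ℝ =>
          ((volume (Metric.ball (0 : Fin n → ℝ) lam)).toReal)⁻¹ •
            ∫ x in Metric.ball (0 : Fin n → ℝ) lam,
              Complex.exp (2 * Real.pi * Complex.I * ((∑ i, (m i : ℝ) * Φ x i : ℝ) : ℂ)))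
        atTop (nhds 0) := by
  obtain ⟨x₀, hx₀⟩ := hm
  have hn : n ≠ 0 := by
    rintro rfl
    rw [Subsingleton.elim x₀ 0, map_zero] at hx₀
    simp at hx₀
  have : Nonempty (Fin n) := Fin.pos_iff_nonempty.1 (Nat.pos_of_ne_zero hn)
  set ℓ : (Fin n → ℝ) →ₗ[ℝ] ℝ := ∑ i, (m i : ℝ) • (LinearMap.proj i ∘ₗ Φ)
  have hℓ : ∀ x, ∑ i, (m i : ℝ) * Φ x i = ℓ x := fun x => by simp [ℓ, LinearMap.sum_apply]
  have hℓ₀ : ℓ ≠ 0 := fun h => hx₀ (by rw [hℓ, h, LinearMap.zero_apply])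
  obtain ⟨C, hC⟩ := exists_norm_integral_ball_exp_two_pi_I_le ℓ hℓ₀
  simp only [hℓ, Fintype.card_fin] at hC ⊢
  refine ⟨⟨C, fun a R hR => ?_⟩, tendsto_inv_volume_ball_smul_zero (C := C) ?_⟩
  · rw [← Nat.cast_pred (Nat.pos_of_ne_zero hn), Real.rpow_natCast]
    exact hC a R (by linarith)
  · filter_upwards [eventually_ge_atTop 0] with r hr
    simpa using hC 0 r hr
end

section
/- Let Ω ⊆ ℝⁿ be bounded with boundary of fractal dimension at most n − δ (δ > 0), let r > 0, and let P ⊆ ℝⁿ be a set of points such that every ball of radius r contains at most K points of P, and let T : P → ℝ be bounded by M. Then the sum of |T(a)| over points a ∈ P whose distance to ∂(λΩ) is less than r is at most c₀ K M λ^{n−δ} for some constant c₀ independent of λ ≥ 1; in particular this sum divided by Vol(λΩ) tends to 0 as λ → ∞. -/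
open MeasureTheory Filter
open scoped Pointwise

/-!
Cover `∂Ω` by `O(ε^{-(n-δ)})` balls of radius `ε = ε₀ / (2λ)`; scaling by `λ` turns this into
`O(λ^{n-δ})` balls of the fixed radius `ε₀ / 2` covering `∂(λΩ)`. A point within `r` of
`∂(λΩ)` lies in one of the concentric balls of radius `r + ε₀ / 2`, and since every ball of a
fixed radius is covered by a bounded number of translates of an `r`-ball, each of these holds
`O(K)` points of `P`. Hence the sum is `O(K M λ^{n-δ})`, while `Vol(λΩ) = λⁿ Vol(Ω)`.
-/

open Metric Set

theorem frontier_smul₀ {G₀ α : Type*} [GroupWithZero G₀] [MulAction G₀ α] [TopologicalSpace α]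
    [ContinuousConstSMul G₀ α] {c : G₀} (hc : c ≠ 0) (s : Set α) :
    frontier (c • s) = c • frontier s :=
  ((Homeomorph.smulOfNeZero c hc).image_frontier s).symm

lemma Set.finite_and_ncard_le_of_subset_biUnion {ι α : Type*} {S : Set α} {t : Finset ι}
    {A : ι → Set α} {L : ℕ} (hA : ∀ i ∈ t, (A i).Finite ∧ (A i).ncard ≤ L)
    (hS : S ⊆ ⋃ i ∈ t, A i) : S.Finite ∧ S.ncard ≤ t.card * L := by
  have hU : (⋃ i ∈ t, A i).Finite := t.finite_toSet.biUnion fun i hi => (hA i hi).1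
  refine ⟨hU.subset hS, ?_⟩
  calc S.ncard ≤ (⋃ i ∈ t, A i).ncard := ncard_le_ncard hS hU
    _ ≤ ∑ i ∈ t, (A i).ncard := t.set_ncard_biUnion_le A
    _ ≤ t.card * L := by
      simpa using Finset.sum_le_card_nsmul t _ L fun i hi => (hA i hi).2

lemma Set.Finite.tsum_subtype_le_ncard_mul {α : Type*} {S : Set α} (hS : S.Finite)
    {f : α → ℝ} {M : ℝ} (hf : ∀ a ∈ S, f a ≤ M) : ∑' a : S, f a ≤ S.ncard * M := by
  have := hS.fintype
  rw [tsum_fintype, ← Nat.card_coe_set_eq, Nat.card_eq_fintype_card, ← Finset.card_univ,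
    ← nsmul_eq_mul]
  exact Finset.sum_le_card_nsmul _ _ _ fun a _ => hf a a.2

section UniformlyDiscrete

variable {E : Type*} [SeminormedAddCommGroup E] [ProperSpace E]

lemma exists_finset_closedBall_subset_iUnion_ball_add {r : ℝ} (hr : 0 < r) (R : ℝ) :
    ∃ s : Finset E, ∀ x, closedBall x R ⊆ ⋃ y ∈ s, ball (x + y) r := by
  obtain ⟨s, hs⟩ := (isCompact_closedBall (0 : E) R).elim_finite_subcover (fun y => ball y r)
    (fun _ => isOpen_ball) fun z _ => mem_iUnion.2 ⟨z, mem_ball_self hr⟩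
  refine ⟨s, fun x z hz => ?_⟩
  have hzx : z - x ∈ closedBall (0 : E) R := by
    rwa [mem_closedBall, dist_zero_right, ← dist_eq_norm]
  obtain ⟨y, hy, hzy⟩ := mem_iUnion₂.1 (hs hzx)
  refine mem_iUnion₂.2 ⟨y, hy, ?_⟩
  rw [mem_ball, dist_eq_norm] at hzy ⊢
  rwa [← sub_sub]

lemma exists_ncard_inter_ball_le {P : Set E} {r : ℝ} {K : ℕ} (hr : 0 < r)
    (hPfin : ∀ x, (P ∩ ball x r).Finite) (hK : ∀ x, (P ∩ ball x r).ncard ≤ K) (R : ℝ) :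
    ∃ N : ℕ, ∀ x, (P ∩ ball x R).Finite ∧ (P ∩ ball x R).ncard ≤ N * K := by
  obtain ⟨s, hs⟩ := exists_finset_closedBall_subset_iUnion_ball_add (E := E) hr R
  refine ⟨s.card, fun x => finite_and_ncard_le_of_subset_biUnion
    (fun y _ => ⟨hPfin (x + y), hK (x + y)⟩) ?_⟩
  rw [← inter_iUnion₂]
  exact inter_subset_inter_right P (ball_subset_closedBall.trans (hs x))

end UniformlyDiscrete

/-- The covering form of "`A` has fractal (upper box-counting) dimension at most `d`". -/
def HasBoxCountingBound {E : Type*} [PseudoMetricSpace E] (A : Set E) (c d ε₀ : ℝ) : Prop :=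
  ∀ ε : ℝ, 0 < ε → ε < ε₀ →
    ∃ F : Finset E, (F.card : ℝ) ≤ c * ε ^ (-d) ∧ A ⊆ ⋃ q ∈ F, ball q ε

lemma ncard_inter_thickening_le_of_subset_biUnion_ball {E : Type*} [PseudoMetricSpace E]
    {P A : Set E} {F : Finset E} {r ρ : ℝ} {L : ℕ}
    (hP : ∀ x, (P ∩ ball x (r + ρ)).Finite ∧ (P ∩ ball x (r + ρ)).ncard ≤ L)
    (hA : A ⊆ ⋃ q ∈ F, ball q ρ) :
    (P ∩ thickening r A).Finite ∧ (P ∩ thickening r A).ncard ≤ F.card * L := by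
  refine finite_and_ncard_le_of_subset_biUnion (fun q _ => hP q) ?_
  rw [← inter_iUnion₂]
  refine inter_subset_inter_right P ((thickening_subset_of_subset r hA).trans ?_)
  simp only [thickening_iUnion]
  exact iUnion₂_mono fun q _ => thickening_ball q r ρ

namespace HasBoxCountingBound

variable {E : Type*} [NormedAddCommGroup E] [NormedSpace ℝ E] {A : Set E} {c d ε₀ : ℝ}

lemma smul (hA : HasBoxCountingBound A c d ε₀) {lam : ℝ} (hlam : 1 ≤ lam) :
    HasBoxCountingBound (lam • A) (c * lam ^ d) d ε₀ := by
  classical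
  intro ε hε hεε₀
  have hlam0 : 0 < lam := one_pos.trans_le hlam
  obtain ⟨F, hFcard, hFcov⟩ :=
    hA (ε / lam) (div_pos hε hlam0) ((div_le_self hε.le hlam).trans_lt hεε₀)
  refine ⟨F.image (lam • ·), ?_, ?_⟩
  · calc ((F.image (lam • ·)).card : ℝ) ≤ F.card := mod_cast Finset.card_image_le
      _ ≤ c * (ε / lam) ^ (-d) := hFcard
      _ = c * lam ^ d * ε ^ (-d) := by
        rw [Real.div_rpow hε.le hlam0.le, Real.rpow_neg hlam0.le, div_inv_eq_mul]
        ring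
  · have hball : ∀ q : E, lam • ball q (ε / lam) = ball (lam • q) ε := fun q => by
      rw [_root_.smul_ball hlam0.ne', Real.norm_of_nonneg hlam0.le, mul_div_cancel₀ _ hlam0.ne']
    calc lam • A ⊆ lam • ⋃ q ∈ F, ball q (ε / lam) := smul_set_mono hFcov
      _ = ⋃ q ∈ F.image (lam • ·), ball q ε := by
        simp only [smul_set_iUnion₂, hball, Finset.set_biUnion_finset_image]

lemma exists_ncard_inter_thickening_smul_le [ProperSpace E] {P : Set E} {r : ℝ} {K : ℕ}
    (hA : HasBoxCountingBound A c d ε₀) (hε₀ : 0 < ε₀) (hr : 0 < r)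
    (hPfin : ∀ x, (P ∩ ball x r).Finite) (hK : ∀ x, (P ∩ ball x r).ncard ≤ K) :
    ∃ C : ℝ, ∀ lam : ℝ, 1 ≤ lam → (P ∩ thickening r (lam • A)).Finite ∧
      ((P ∩ thickening r (lam • A)).ncard : ℝ) ≤ C * K * lam ^ d := by
  obtain ⟨N, hN⟩ := exists_ncard_inter_ball_le hr hPfin hK (r + ε₀ / 2)
  refine ⟨c * (ε₀ / 2) ^ (-d) * N, fun lam hlam => ?_⟩
  obtain ⟨F, hFcard, hFcov⟩ := hA.smul hlam (ε₀ / 2) (half_pos hε₀) (half_lt_self hε₀)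
  obtain ⟨hfin, hcard⟩ := ncard_inter_thickening_le_of_subset_biUnion_ball hN hFcov
  refine ⟨hfin, ?_⟩
  calc ((P ∩ thickening r (lam • A)).ncard : ℝ) ≤ F.card * (N * K) := mod_cast hcard
    _ ≤ c * lam ^ d * (ε₀ / 2) ^ (-d) * (N * K) := by gcongr
    _ = c * (ε₀ / 2) ^ (-d) * N * K * lam ^ d := by ring

end HasBoxCountingBound

lemma tendsto_div_atTop_zero_of_le_rpow {f g : ℝ → ℝ} {n : ℕ} {C δ v : ℝ} (hδ : 0 < δ)
    (hv : 0 < v) (hf0 : ∀ x, 0 ≤ f x) (hf : ∀ x, 1 ≤ x → f x ≤ C * x ^ ((n : ℝ) - δ))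
    (hg : ∀ x, 1 ≤ x → g x = x ^ n * v) :
    Tendsto (fun x => f x / g x) atTop (nhds 0) := by
  have hlim := (tendsto_rpow_neg_atTop hδ).const_mul (C / v)
  rw [mul_zero] at hlim
  refine squeeze_zero' ?_ ?_ hlim
  · filter_upwards [eventually_ge_atTop 1] with x hx
    rw [hg x hx]
    have : 0 < x := one_pos.trans_le hx
    positivity [hf0 x]
  · filter_upwards [eventually_ge_atTop 1] with x hx
    have hx0 : 0 < x := one_pos.trans_le hx
    calc f x / g x ≤ C * x ^ ((n : ℝ) - δ) / (x ^ n * v) := by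
          rw [hg x hx]
          gcongr
          exact hf x hx
      _ = C / v * x ^ (-δ) := by
        rw [Real.rpow_sub hx0, Real.rpow_natCast, Real.rpow_neg hx0.le]
        field_simp

theorem boundary_contribution_negligible_general (n : ℕ) (δ : ℝ) (hδ : 0 < δ)
    (Ω : Set (Fin n → ℝ)) (hΩb : Bornology.IsBounded Ω)
    (hΩv : 0 < volume Ω)
    (c ε₀ : ℝ) (hε₀ : 0 < ε₀)
    (hfr : ∀ ε : ℝ, 0 < ε → ε < ε₀ →
      ∃ F : Finset (Fin n → ℝ), (F.card : ℝ) ≤ c * ε ^ (-((n : ℝ) - δ)) ∧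
        frontier Ω ⊆ ⋃ q ∈ F, Metric.ball q ε)
    (r : ℝ) (hr : 0 < r) (P : Set (Fin n → ℝ))
    (hPfin : ∀ x, (P ∩ Metric.ball x r).Finite)
    (K : ℕ) (hK : ∀ x, (P ∩ Metric.ball x r).ncard ≤ K)
    (T : (Fin n → ℝ) → ℝ) (M : ℝ) (hM : ∀ a ∈ P, |T a| ≤ M) :
    (∃ c₀ : ℝ, ∀ lam : ℝ, 1 ≤ lam →
      {a : Fin n → ℝ | a ∈ P ∧ ∃ b ∈ frontier (lam • Ω), dist a b < r}.Finite ∧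
        (∑' a : {a : Fin n → ℝ | a ∈ P ∧ ∃ b ∈ frontier (lam • Ω), dist a b < r},
            |T (a : Fin n → ℝ)|) ≤ c₀ * K * M * lam ^ ((n : ℝ) - δ)) ∧
      Tendsto (fun lam : ℝ =>
          (∑' a : {a : Fin n → ℝ | a ∈ P ∧ ∃ b ∈ frontier (lam • Ω), dist a b < r},
              |T (a : Fin n → ℝ)|) / (volume (lam • Ω)).toReal)
        atTop (nhds 0) := by
  rcases P.eq_empty_or_nonempty with rfl | ⟨x₀, hx₀⟩
  · exact ⟨⟨0, by simp⟩, by simp⟩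
  have hM0 : 0 ≤ M := (abs_nonneg _).trans (hM x₀ hx₀)
  obtain ⟨C, hC⟩ := HasBoxCountingBound.exists_ncard_inter_thickening_smul_le
    (hfr : HasBoxCountingBound (frontier Ω) c ((n : ℝ) - δ) ε₀) hε₀ hr hPfin hK
  have hbound : ∀ lam : ℝ, 1 ≤ lam →
      {a : Fin n → ℝ | a ∈ P ∧ ∃ b ∈ frontier (lam • Ω), dist a b < r}.Finite ∧
        (∑' a : {a : Fin n → ℝ | a ∈ P ∧ ∃ b ∈ frontier (lam • Ω), dist a b < r},
            |T (a : Fin n → ℝ)|) ≤ C * K * M * lam ^ ((n : ℝ) - δ) := by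
    intro lam hlam
    have hS : {a | a ∈ P ∧ ∃ b ∈ frontier (lam • Ω), dist a b < r} =
        P ∩ thickening r (lam • frontier Ω) := by
      rw [← frontier_smul₀ (one_pos.trans_le hlam).ne']
      ext a
      simp only [mem_ofPred_eq, mem_inter_iff, mem_thickening_iff]
    obtain ⟨hfin, hcard⟩ := hC lam hlam
    rw [hS]
    refine ⟨hfin, (hfin.tsum_subtype_le_ncard_mul fun a ha => hM a ha.1).trans ?_⟩
    calc _ ≤ C * K * lam ^ ((n : ℝ) - δ) * M := by gcongr
      _ = C * K * M * lam ^ ((n : ℝ) - δ) := by ring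
  refine ⟨⟨C, hbound⟩, tendsto_div_atTop_zero_of_le_rpow hδ
    (ENNReal.toReal_pos hΩv.ne' hΩb.measure_lt_top.ne) (fun _ => tsum_nonneg fun _ => abs_nonneg _)
    (fun lam hlam => (hbound lam hlam).2) fun lam hlam => ?_⟩
  rw [Measure.addHaar_smul_of_nonneg volume (zero_le_one.trans hlam), ENNReal.toReal_mul,
    ENNReal.toReal_ofReal (by positivity), Module.finrank_fin_fun]

/-- The contribution of points near the boundary of λΩ is negligible: if ∂Ω has fractal
dimension ≤ n − δ, each r-ball contains at most K points of P, and |T| ≤ M on P, then the sum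
of |T| over points of P at distance < r from ∂(λΩ) is at most c₀ K M λ^{n−δ}, and divided by
Vol(λΩ) it tends to 0. -/
theorem boundary_contribution_negligible (n : ℕ) (δ : ℝ) (hδ : 0 < δ)
    (Ω : Set (Fin n → ℝ)) (hΩb : Bornology.IsBounded Ω) (hΩm : MeasurableSet Ω)
    (hΩv : 0 < volume Ω)
    (c ε₀ : ℝ) (hc : 0 < c) (hε₀ : 0 < ε₀)
    (hfr : ∀ ε : ℝ, 0 < ε → ε < ε₀ →
      ∃ F : Finset (Fin n → ℝ), (F.card : ℝ) ≤ c * ε ^ (-((n : ℝ) - δ)) ∧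
        frontier Ω ⊆ ⋃ q ∈ F, Metric.ball q ε)
    (r : ℝ) (hr : 0 < r) (P : Set (Fin n → ℝ))
    (hPfin : ∀ x, (P ∩ Metric.ball x r).Finite)
    (K : ℕ) (hK : ∀ x, (P ∩ Metric.ball x r).ncard ≤ K)
    (T : (Fin n → ℝ) → ℝ) (M : ℝ) (hM : ∀ a ∈ P, |T a| ≤ M) :
    (∃ c₀ : ℝ, ∀ lam : ℝ, 1 ≤ lam →
      {a : Fin n → ℝ | a ∈ P ∧ ∃ b ∈ frontier (lam • Ω), dist a b < r}.Finite ∧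
        (∑' a : {a : Fin n → ℝ | a ∈ P ∧ ∃ b ∈ frontier (lam • Ω), dist a b < r},
            |T (a : Fin n → ℝ)|) ≤ c₀ * K * M * lam ^ ((n : ℝ) - δ)) ∧
      Tendsto (fun lam : ℝ =>
          (∑' a : {a : Fin n → ℝ | a ∈ P ∧ ∃ b ∈ frontier (lam • Ω), dist a b < r},
              |T (a : Fin n → ℝ)|) / (volume (lam • Ω)).toReal)
        atTop (nhds 0) :=
  boundary_contribution_negligible_general n δ hδ Ω hΩb hΩv c ε₀ hε₀ hfr r hr P hPfin K hK T M hM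
end
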